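/- For every T ≥ 1, the periodic Gaussian φ_p is differentiable on ℝ and its derivative satisfies φ_p′(x) ≥ −T²·x·exp(−T²x²/2) for all x ∈ [0, π]. -/

import Mathlib

open Real Set

/-!
With `g(t) = exp(-t²T²/2)` we have `φ_p' = W·Σ_j g'(x + 2πj)` and `g'(t) = -T² t g(t)`; the
termwise differentiation is justified by the Gaussian bounds behind the Jacobi theta function.
As `g'` is odd, the terms `j = k` and `j = -k` add up to `T²(B g(B) - A g(A))` with
`A = x + 2πk ≥ B = 2πk - x ≥ π`, which is nonnegative because `t g(t)` decreases for `t ≥ 1/T`.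
So the series is at least its term `g'(x) ≤ 0`, and `0 < W ≤ 1` gives `φ_p'(x) ≥ W g'(x) ≥ g'(x)`.
-/

noncomputable section

/-- The (unnormalized) `2π`-periodization of the Gaussian `x ↦ exp(-x²T²/2)`. -/
def periodicGaussSum (T x : ℝ) : ℝ :=
  ∑' j : ℤ, Real.exp (-((x + 2 * π * j) ^ 2 * T ^ 2) / 2)

/-- The normalizing constant `W = (Σ_{j∈ℤ} exp(-2π²j²T²))⁻¹`, so that `φ_p(0) = 1`. -/
def Wconst (T : ℝ) : ℝ := (∑' j : ℤ, Real.exp (-(2 * π ^ 2 * j ^ 2 * T ^ 2)))⁻¹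

/-- The periodic Gaussian `φ_p(x) = W·Σ_{j∈ℤ} exp(-(x+2πj)²T²/2)`. -/
def phip (T x : ℝ) : ℝ := Wconst T * periodicGaussSum T x

theorem Summable.le_tsum_int_of_add_neg_nonneg {α : Type*} [AddCommMonoid α] [PartialOrder α]
    [IsOrderedCancelAddMonoid α] [TopologicalSpace α] [OrderClosedTopology α] [ContinuousAdd α]
    {f : ℤ → α} (hf : Summable f) (h : ∀ n : ℕ, n ≠ 0 → 0 ≤ f n + f (-n)) :
    f 0 ≤ ∑' n, f n := by
  have := hf.nat_add_neg.le_tsum 0 h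
  rw [tsum_nat_add_neg hf] at this
  simpa using this

def gauss (T t : ℝ) : ℝ := exp (-(t ^ 2 * T ^ 2) / 2)

theorem gauss_pos (T t : ℝ) : 0 < gauss T t := exp_pos _

theorem hasDerivAt_gauss (T t : ℝ) : HasDerivAt (gauss T) (-(T ^ 2 * t) * gauss T t) t := by
  have h : HasDerivAt (fun t => -(t ^ 2 * T ^ 2) / 2) (-(T ^ 2 * t)) t := by
    refine ((((hasDerivAt_pow 2 t).mul_const (T ^ 2)).fun_neg).div_const 2).congr_deriv ?_
    push_cast; ring
  exact h.exp.congr_deriv (mul_comm _ _)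

section gauss

variable {T : ℝ}

theorem gauss_neg (t : ℝ) : gauss T (-t) = gauss T t := by
  simp [gauss]

theorem antitoneOn_mul_gauss (hT : 0 < T) : AntitoneOn (fun t => t * gauss T t) (Ici T⁻¹) := by
  have hd (t : ℝ) : HasDerivAt (fun t => t * gauss T t) ((1 - (T * t) ^ 2) * gauss T t) t := by
    refine ((hasDerivAt_id' t).fun_mul (hasDerivAt_gauss T t)).congr_deriv ?_
    ring
  refine antitoneOn_of_deriv_nonpos (convex_Ici _)
    (fun t _ => (hd t).continuousAt.continuousWithinAt)
    (fun t _ => (hd t).differentiableAt.differentiableWithinAt) fun t ht => ?_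
  rw [interior_Ici, mem_Ioi, inv_lt_iff_one_lt_mul₀ hT] at ht
  rw [(hd t).deriv]
  exact mul_nonpos_of_nonpos_of_nonneg (by nlinarith) (gauss_pos T t).le

/-- The shape of the bound is that of `summable_pow_mul_jacobiTheta₂_term_bound`. -/
theorem gauss_add_two_pi_mul_le {R y : ℝ} (hy : |y| ≤ R) (j : ℤ) :
    gauss T (y + 2 * π * j) ≤
      exp (-π * (2 * π * T ^ 2 * j ^ 2 - 2 * (R * T ^ 2) * (|j| : ℤ))) := by
  have hjy : -(|(j : ℝ)| * R) ≤ j * y := by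
    have := mul_le_mul_of_nonneg_left hy (abs_nonneg (j : ℝ))
    rw [← abs_mul] at this
    linarith [neg_abs_le ((j : ℝ) * y)]
  rw [gauss, exp_le_exp, Int.cast_abs]
  nlinarith [mul_nonneg (sq_nonneg T) (sq_nonneg y), pi_pos,
    mul_le_mul_of_nonneg_left hjy (mul_nonneg pi_pos.le (sq_nonneg T))]

theorem norm_deriv_gauss_add_two_pi_mul_le {R y : ℝ} (hy : |y| ≤ R) (j : ℤ) :
    ‖-(T ^ 2 * (y + 2 * π * j)) * gauss T (y + 2 * π * j)‖ ≤
      T ^ 2 * (R + 2 * π * (|j| : ℤ)) *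
        exp (-π * (2 * π * T ^ 2 * j ^ 2 - 2 * (R * T ^ 2) * (|j| : ℤ))) := by
  have habs : |y + 2 * π * j| ≤ R + 2 * π * (|j| : ℤ) := by
    rw [Int.cast_abs]
    calc |y + 2 * π * j| ≤ |y| + |2 * π * j| := abs_add_le _ _
      _ = |y| + 2 * π * |(j : ℝ)| := by rw [abs_mul, abs_of_pos two_pi_pos]
      _ ≤ R + 2 * π * |(j : ℝ)| := by linarith
  rw [norm_mul, norm_neg, norm_mul, Real.norm_eq_abs, Real.norm_eq_abs, abs_sq, mul_assoc,
    Real.norm_of_nonneg (gauss_pos T _).le, ← mul_assoc]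
  exact mul_le_mul (mul_le_mul_of_nonneg_left habs (sq_nonneg T)) (gauss_add_two_pi_mul_le hy j)
    (gauss_pos T _).le (mul_nonneg (sq_nonneg T) ((abs_nonneg _).trans habs))

theorem summable_gauss_deriv_majorant (hT : T ≠ 0) (R : ℝ) : Summable fun j : ℤ =>
    T ^ 2 * (R + 2 * π * (|j| : ℤ)) *
      exp (-π * (2 * π * T ^ 2 * j ^ 2 - 2 * (R * T ^ 2) * (|j| : ℤ))) := by
  have hpos : 0 < 2 * π * T ^ 2 := by positivity
  have h0 := summable_pow_mul_jacobiTheta₂_term_bound (R * T ^ 2) hpos 0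
  have h1 := summable_pow_mul_jacobiTheta₂_term_bound (R * T ^ 2) hpos 1
  refine ((h0.mul_left (T ^ 2 * R)).add (h1.mul_left (T ^ 2 * (2 * π)))).congr fun j => ?_
  simp only [pow_zero, pow_one]
  ring

theorem summable_gauss_add_two_pi_mul (hT : T ≠ 0) (y : ℝ) :
    Summable fun j : ℤ => gauss T (y + 2 * π * j) := by
  have hpos : 0 < 2 * π * T ^ 2 := by positivity
  refine (summable_pow_mul_jacobiTheta₂_term_bound (|y| * T ^ 2) hpos 0).of_nonneg_of_le
    (fun j => (exp_pos _).le) fun j => ?_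
  simpa only [pow_zero, one_mul] using gauss_add_two_pi_mul_le le_rfl j

end gauss

theorem hasDerivAt_periodicGaussSum {T : ℝ} (hT : T ≠ 0) (x : ℝ) :
    HasDerivAt (periodicGaussSum T)
      (∑' j : ℤ, -(T ^ 2 * (x + 2 * π * j)) * gauss T (x + 2 * π * j)) x := by
  set R := |x| + 1
  have hx : x ∈ Ioo (-R) R := abs_lt.mp (by linarith)
  exact hasDerivAt_tsum_of_isPreconnected (summable_gauss_deriv_majorant hT R) isOpen_Ioo
    isPreconnected_Ioo
    (fun j y _ => (hasDerivAt_gauss T _).comp_add_const y (2 * π * j))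
    (fun j y hy => norm_deriv_gauss_add_two_pi_mul_le (abs_le.mpr ⟨hy.1.le, hy.2.le⟩) j)
    hx (summable_gauss_add_two_pi_mul hT x) hx

theorem Wconst_mem_Ioc {T : ℝ} (hT : T ≠ 0) : Wconst T ∈ Ioc 0 1 := by
  have hsum : Summable fun j : ℤ => exp (-(2 * π ^ 2 * j ^ 2 * T ^ 2)) :=
    (summable_gauss_add_two_pi_mul hT 0).congr fun j => by rw [gauss]; ring_nf
  have h1 : 1 ≤ ∑' j : ℤ, exp (-(2 * π ^ 2 * j ^ 2 * T ^ 2)) := by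
    simpa using hsum.le_tsum 0 fun j _ => (exp_pos _).le
  exact ⟨inv_pos.mpr (by linarith), inv_le_one_of_one_le₀ h1⟩

theorem neg_mul_gauss_le_tsum_add_two_pi_mul {T x : ℝ} (hT : 1 ≤ π * T) (hx : x ∈ Icc 0 π) :
    -(T ^ 2 * x) * gauss T x ≤
      ∑' j : ℤ, -(T ^ 2 * (x + 2 * π * j)) * gauss T (x + 2 * π * j) := by
  have hT0 : 0 < T := pos_of_mul_pos_right (one_pos.trans_le hT) pi_pos.le
  have hsum : Summable fun j : ℤ => -(T ^ 2 * (x + 2 * π * j)) * gauss T (x + 2 * π * j) :=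
    .of_norm_bounded (summable_gauss_deriv_majorant hT0.ne' |x|)
      fun j => norm_deriv_gauss_add_two_pi_mul_le le_rfl j
  refine le_of_eq_of_le (by simp) (hsum.le_tsum_int_of_add_neg_nonneg fun n hn => ?_)
  have hn1 : (1 : ℝ) ≤ n := by exact_mod_cast Nat.one_le_iff_ne_zero.mpr hn
  have hB : T⁻¹ ≤ 2 * π * n - x := by
    rw [inv_le_iff_one_le_mul₀ hT0]
    nlinarith [hx.2, pi_pos]
  have hmono := antitoneOn_mul_gauss hT0 hB (hB.trans (by linarith [hx.1]))
    (show 2 * π * n - x ≤ x + 2 * π * n by linarith [hx.1])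
  have hpair : -(T ^ 2 * (x + 2 * π * ((n : ℤ) : ℝ))) * gauss T (x + 2 * π * ((n : ℤ) : ℝ)) +
      -(T ^ 2 * (x + 2 * π * ((-n : ℤ) : ℝ))) * gauss T (x + 2 * π * ((-n : ℤ) : ℝ)) =
      T ^ 2 * ((2 * π * n - x) * gauss T (2 * π * n - x) -
        (x + 2 * π * n) * gauss T (x + 2 * π * n)) := by
    rw [show x + 2 * π * ((-n : ℤ) : ℝ) = -(2 * π * n - x) by push_cast; ring, gauss_neg]
    push_cast
    ring
  rw [hpair]
  exact mul_nonneg (sq_nonneg T) (sub_nonneg.mpr hmono)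

theorem periodicGaussian_deriv_bound (T : ℝ) (hT : 1 ≤ T) :
    Differentiable ℝ (phip T) ∧
      ∀ x ∈ Icc (0 : ℝ) π, -(T ^ 2 * x * Real.exp (-(T ^ 2 * x ^ 2) / 2)) ≤ deriv (phip T) x := by
  have hT0 : T ≠ 0 := by positivity
  have hderiv (x : ℝ) : HasDerivAt (phip T) _ x :=
    (hasDerivAt_periodicGaussSum hT0 x).const_mul (Wconst T)
  refine ⟨fun x => (hderiv x).differentiableAt, fun x hx => ?_⟩
  rw [(hderiv x).deriv]
  obtain ⟨hW0, hW1⟩ := Wconst_mem_Ioc hT0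
  have hpi_T : 1 ≤ π * T := by nlinarith [pi_gt_three]
  have hleft_nonpos : -(T ^ 2 * x) * gauss T x ≤ 0 :=
    mul_nonpos_of_nonpos_of_nonneg (by nlinarith [hx.1]) (gauss_pos T x).le
  calc -(T ^ 2 * x * exp (-(T ^ 2 * x ^ 2) / 2))
      = -(T ^ 2 * x) * gauss T x := by rw [gauss]; ring_nf
    _ ≤ Wconst T * (-(T ^ 2 * x) * gauss T x) := by nlinarith
    _ ≤ _ := mul_le_mul_of_nonneg_left (neg_mul_gauss_le_tsum_add_two_pi_mul hpi_T hx) hW0.le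

end
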